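/- Define W(t₁,t₂) = 2Δξ + (Δx)²/Δξ + cos(t₂)√(1+sin²t₂)/sin(t₂) − cos(t₁)√(1+sin²t₁)/sin(t₁), where Δx = sin t₂ − sin t₁ and Δξ = ξ(t₂) − ξ(t₁) with ξ(t) = ∫₀ᵗ sin²/√(1+sin²). For t₁ < t₂ with sin t₁ · sin t₂ ≠ 0 and Δξ > 0, the partial derivative ∂W/∂t₁ equals (√(1+sin²t₁)/(Δξ)²)·[cos(t₁)Δξ/sin(t₁) − sin(t₁)Δx/√(1+sin²t₁)]², and in particular ∂W/∂t₁ ≥ 0. -/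

import Mathlib

open Real

noncomputable def xi (t : ℝ) : ℝ :=
  ∫ τ in (0:ℝ)..t, Real.sin τ ^ 2 / Real.sqrt (1 + Real.sin τ ^ 2)

noncomputable def W (t₁ t₂ : ℝ) : ℝ :=
  2 * (xi t₂ - xi t₁) + (Real.sin t₂ - Real.sin t₁) ^ 2 / (xi t₂ - xi t₁)
    + Real.cos t₂ * Real.sqrt (1 + Real.sin t₂ ^ 2) / Real.sin t₂
    - Real.cos t₁ * Real.sqrt (1 + Real.sin t₁ ^ 2) / Real.sin t₁

/-!
The boundary term `cos s √(1 + sin² s) / sin s` has derivative `-(1 + sin⁴ s) / (sin² s √(1 + sin² s))`;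
added to `-2 ξ'(t₁)` it becomes `cos² t₁ √(1 + sin² t₁) / sin² t₁`, because `1 - sin⁴ = cos² (1 + sin²)`.
That is the first square in the expansion of the claimed perfect square, and the derivative of
`Δx² / Δξ` supplies the cross term and the last square.
-/

lemma continuous_sin_sq_div_sqrt :
    Continuous fun τ : ℝ => sin τ ^ 2 / √(1 + sin τ ^ 2) :=
  (continuous_sin.pow 2).div (continuous_const.add (continuous_sin.pow 2)).sqrt
    fun τ => by positivity

lemma hasDerivAt_xi (t : ℝ) : HasDerivAt xi (sin t ^ 2 / √(1 + sin t ^ 2)) t :=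
  intervalIntegral.integral_hasDerivAt_right
    (continuous_sin_sq_div_sqrt.intervalIntegrable _ _)
    (continuous_sin_sq_div_sqrt.stronglyMeasurableAtFilter _ _)
    continuous_sin_sq_div_sqrt.continuousAt

lemma hasDerivAt_cos_mul_sqrt_div_sin {t : ℝ} (ht : sin t ≠ 0) :
    HasDerivAt (fun s => cos s * √(1 + sin s ^ 2) / sin s)
      (-(1 + sin t ^ 4) / (sin t ^ 2 * √(1 + sin t ^ 2))) t := by
  have hpos : 0 < 1 + sin t ^ 2 := by positivity
  have hsqrt : HasDerivAt (fun s => √(1 + sin s ^ 2))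
      (2 * sin t ^ 1 * cos t / (2 * √(1 + sin t ^ 2))) t :=
    (((hasDerivAt_sin t).pow 2).const_add 1).sqrt hpos.ne'
  have hnum : HasDerivAt (fun s => cos s * √(1 + sin s ^ 2))
      (-sin t * √(1 + sin t ^ 2) + cos t * (2 * sin t ^ 1 * cos t / (2 * √(1 + sin t ^ 2)))) t :=
    (hasDerivAt_cos t).mul hsqrt
  refine (hnum.div (hasDerivAt_sin t) ht).congr_deriv ?_
  have hg : √(1 + sin t ^ 2) ≠ 0 := (sqrt_pos.mpr hpos).ne'
  field_simp
  linear_combination (-sin t ^ 2 - cos t ^ 2) * sq_sqrt hpos.le - sin_sq_add_cos_sq t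

lemma neg_two_mul_sin_sq_div_add_eq_mul_sq {t d D : ℝ} (ht : sin t ≠ 0) (hD : D ≠ 0) :
    -2 * (sin t ^ 2 / √(1 + sin t ^ 2))
        - (2 * cos t * d * D - d ^ 2 * (sin t ^ 2 / √(1 + sin t ^ 2))) / D ^ 2
        + (1 + sin t ^ 4) / (sin t ^ 2 * √(1 + sin t ^ 2)) =
      √(1 + sin t ^ 2) / D ^ 2 * (cos t * D / sin t - sin t * d / √(1 + sin t ^ 2)) ^ 2 := by
  have hpos : 0 < 1 + sin t ^ 2 := by positivity
  have hg : √(1 + sin t ^ 2) ≠ 0 := (sqrt_pos.mpr hpos).ne'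
  field_simp
  linear_combination (-D ^ 2 * cos t ^ 2) * sq_sqrt hpos.le
    - D ^ 2 * (1 + sin t ^ 2) * sin_sq_add_cos_sq t

lemma hasDerivAt_W_left {t₁ t₂ : ℝ} (h₁ : sin t₁ ≠ 0) (hΔ : xi t₂ - xi t₁ ≠ 0) :
    HasDerivAt (fun s => W s t₂)
      (√(1 + sin t₁ ^ 2) / (xi t₂ - xi t₁) ^ 2 *
        (cos t₁ * (xi t₂ - xi t₁) / sin t₁
          - sin t₁ * (sin t₂ - sin t₁) / √(1 + sin t₁ ^ 2)) ^ 2) t₁ := by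
  have hΔξ := (hasDerivAt_xi t₁).const_sub (xi t₂)
  have hΔx : HasDerivAt (fun s => (sin t₂ - sin s) ^ 2)
      (2 * (sin t₂ - sin t₁) ^ 1 * -cos t₁) t₁ :=
    ((hasDerivAt_sin t₁).const_sub (sin t₂)).pow 2
  have := (((hΔξ.const_mul 2).add (hΔx.div hΔξ hΔ)).add_const
    (cos t₂ * √(1 + sin t₂ ^ 2) / sin t₂)).sub (hasDerivAt_cos_mul_sqrt_div_sin h₁)
  rw [← neg_two_mul_sin_sq_div_add_eq_mul_sq h₁ hΔ]
  exact this.congr_deriv (by ring)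

theorem W_partial_t1_general (t₁ t₂ : ℝ)
    (hs : Real.sin t₁ * Real.sin t₂ ≠ 0) (hΔ : 0 < xi t₂ - xi t₁) :
    deriv (fun s => W s t₂) t₁ =
      (Real.sqrt (1 + Real.sin t₁ ^ 2) / (xi t₂ - xi t₁) ^ 2) *
        (Real.cos t₁ * (xi t₂ - xi t₁) / Real.sin t₁
          - Real.sin t₁ * (Real.sin t₂ - Real.sin t₁) / Real.sqrt (1 + Real.sin t₁ ^ 2)) ^ 2
    ∧ 0 ≤ deriv (fun s => W s t₂) t₁ := by
  have hderiv := (hasDerivAt_W_left (left_ne_zero_of_mul hs) hΔ.ne').deriv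
  exact ⟨hderiv, hderiv ▸ by positivity⟩

theorem W_partial_t1 (t₁ t₂ : ℝ) (h : t₁ < t₂)
    (hs : Real.sin t₁ * Real.sin t₂ ≠ 0) (hΔ : 0 < xi t₂ - xi t₁) :
    deriv (fun s => W s t₂) t₁ =
      (Real.sqrt (1 + Real.sin t₁ ^ 2) / (xi t₂ - xi t₁) ^ 2) *
        (Real.cos t₁ * (xi t₂ - xi t₁) / Real.sin t₁
          - Real.sin t₁ * (Real.sin t₂ - Real.sin t₁) / Real.sqrt (1 + Real.sin t₁ ^ 2)) ^ 2
    ∧ 0 ≤ deriv (fun s => W s t₂) t₁ :=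
  W_partial_t1_general t₁ t₂ hs hΔ
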